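/- For odd N = 2p−1 with bar notation ī = N−i+1, the full family of N² projectors P_{pp} = (pp)⊗(pp), 2P_{pi(ε)} = (pp)⊗((ii)+(īī)+ε((iī)+(īi))), 2P_{ip(ε)} = ((ii)+(īī)+ε((iī)+(īi)))⊗(pp), 2P_{ij(ε)} = (ii)⊗(jj)+(īī)⊗(j̄j̄)+ε((iī)⊗(jj̄)+(īi)⊗(j̄j)), 2P_{ij̄(ε)} = (ii)⊗(j̄j̄)+(īī)⊗(jj)+ε((iī)⊗(j̄j)+(īi)⊗(jj̄)), with i,j ranging over 1,…,p−1 and ε = ±1, satisfies P_α P_β = δ_{αβ} P_α and Σ_α P_α = I_{N²×N²}. -/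

import Mathlib

open Matrix Kronecker

/-- `(a b)`: the N×N elementary matrix with a single 1 in row `a`, column `b`
(1-based indices, as in the paper). -/
def elemN (N a b : ℕ) : Matrix (Fin N) (Fin N) ℝ :=
  fun c d => if (c : ℕ) + 1 = a ∧ (d : ℕ) + 1 = b then 1 else 0

/-- Index set for the nested family of projectors for `N = 2p-1`:
`(pp)`, `(p,i,ε)`, `(i,p,ε)`, `(i,j,ε)`, `(i,j̄,ε)` with `i,j ∈ {1,…,p-1}`, `ε = ±1`
(`Bool` encodes `ε`: `true ↦ +`, `false ↦ −`). -/
abbrev NestIdx (p : ℕ) : Type :=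
  Unit ⊕ (Fin (p-1) × Bool) ⊕ (Fin (p-1) × Bool) ⊕
    (Fin (p-1) × Fin (p-1) × Bool) ⊕ (Fin (p-1) × Fin (p-1) × Bool)

/-- sign of `ε` -/
def sgn (e : Bool) : ℝ := if e then 1 else -1

/-- The nested family of projectors for odd `N = 2p-1`.  For `k : Fin (p-1)` the
1-based index is `i = k+1` and `ī = N - i + 1 = 2p - i`. -/
noncomputable def Pnest (p : ℕ) : NestIdx p →
    Matrix (Fin (2*p-1) × Fin (2*p-1)) (Fin (2*p-1) × Fin (2*p-1)) ℝ :=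
  let N := 2*p-1
  let E := elemN N
  fun α =>
  match α with
  | Sum.inl _ => E p p ⊗ₖ E p p
  | Sum.inr (Sum.inl (k, e)) =>
      let i := (k : ℕ) + 1
      (1/2 : ℝ) • (E p p ⊗ₖ ((E i i + E (N-i+1) (N-i+1)) + sgn e • (E i (N-i+1) + E (N-i+1) i)))
  | Sum.inr (Sum.inr (Sum.inl (k, e))) =>
      let i := (k : ℕ) + 1
      (1/2 : ℝ) • (((E i i + E (N-i+1) (N-i+1)) + sgn e • (E i (N-i+1) + E (N-i+1) i)) ⊗ₖ E p p)
  | Sum.inr (Sum.inr (Sum.inr (Sum.inl (k, l, e)))) =>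
      let i := (k : ℕ) + 1
      let j := (l : ℕ) + 1
      (1/2 : ℝ) • ((E i i ⊗ₖ E j j + E (N-i+1) (N-i+1) ⊗ₖ E (N-j+1) (N-j+1))
        + sgn e • (E i (N-i+1) ⊗ₖ E j (N-j+1) + E (N-i+1) i ⊗ₖ E (N-j+1) j))
  | Sum.inr (Sum.inr (Sum.inr (Sum.inr (k, l, e)))) =>
      let i := (k : ℕ) + 1
      let j := (l : ℕ) + 1
      (1/2 : ℝ) • ((E i i ⊗ₖ E (N-j+1) (N-j+1) + E (N-i+1) (N-i+1) ⊗ₖ E j j)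
        + sgn e • (E i (N-i+1) ⊗ₖ E (N-j+1) j + E (N-i+1) i ⊗ₖ E j (N-j+1)))

/-!
Each `P_α` is a rank-one matrix `c_α v_α v_αᵀ` on `ℝ^{N×N}`: `v_α = e_u + ε e_ū` for an index
pair `u` and its bar `ū = (ā, b̄)`, with `c_α = 1/2`, except `P_pp = e_u e_uᵀ` for the fixed point
`u = (p, p)` of the bar involution. The pairs `u` form a transversal of this involution, and pairs
with the same `u` differ only in `ε`, so `c_α ⟨v_α, v_β⟩ = δ_αβ`; this gives `P_α P_β = δ_αβ P_α`.
Since there are exactly `N²` indices, the square matrices `A = (v_α)_α` (columns) and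
`B = (c_α v_αᵀ)_α` (rows) satisfy `B A = 1`, hence also `Σ_α P_α = A B = 1`.
-/

section Biorthogonal

variable {K ι n : Type*} [CommRing K] [Fintype n] [DecidableEq ι]
  {c : ι → K} {v : ι → n → K}

theorem smul_vecMulVec_mul_smul_vecMulVec_of_biorthogonal
    (h : ∀ α β, c α * (v α ⬝ᵥ v β) = if α = β then 1 else 0) (α β : ι) :
    (c α • vecMulVec (v α) (v α)) * (c β • vecMulVec (v β) (v β))
      = if α = β then c α • vecMulVec (v α) (v α) else 0 := by
  rw [smul_mul_smul_comm, vecMulVec_mul_vecMulVec, vecMulVec_smul, smul_smul, mul_right_comm, h]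
  split_ifs with hαβ
  · rw [one_mul, hαβ]
  · rw [zero_mul, zero_smul]

theorem sum_smul_vecMulVec_eq_one_of_biorthogonal [Fintype ι] [DecidableEq n]
    (h : ∀ α β, c α * (v α ⬝ᵥ v β) = if α = β then 1 else 0)
    (hcard : Fintype.card ι = Fintype.card n) :
    ∑ α, c α • vecMulVec (v α) (v α) = 1 := by
  let A : Matrix n ι K := of fun i α => v α i
  let B : Matrix ι n K := of fun α j => c α * v α j
  have hBA : B * A = 1 := by
    ext α β
    simp only [B, A, mul_apply, of_apply, mul_assoc, ← Finset.mul_sum, one_apply]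
    exact h α β
  have hAB : A * B = 1 := (mul_eq_one_comm_of_equiv (Fintype.equivOfCardEq hcard.symm)).mpr hBA
  rw [← hAB]
  ext i j
  simp only [A, B, mul_apply, of_apply, Matrix.sum_apply, Matrix.smul_apply, vecMulVec_apply,
    smul_eq_mul]
  exact Finset.sum_congr rfl fun α _ => by ring

end Biorthogonal

-- `(a, b) ↦ (ā, b̄)` with `ī = N - i + 1`
def bar (N : ℕ) (u : ℕ × ℕ) : ℕ × ℕ := (N - u.1 + 1, N - u.2 + 1)

def InBox (N : ℕ) (u : ℕ × ℕ) : Prop := 1 ≤ u.1 ∧ u.1 ≤ N ∧ 1 ≤ u.2 ∧ u.2 ≤ N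

theorem InBox.bar {N : ℕ} {u : ℕ × ℕ} (hu : InBox N u) : InBox N (bar N u) := by
  unfold InBox _root_.bar at *; omega

-- `u` is a 1-based index pair, as in `elemN`.
def elemVec (N : ℕ) (u : ℕ × ℕ) : Fin N × Fin N → ℝ :=
  fun x => if ((x.1 : ℕ) + 1, (x.2 : ℕ) + 1) = u then 1 else 0

theorem elemN_kronecker_elemN (N a b c d : ℕ) :
    elemN N a b ⊗ₖ elemN N c d = vecMulVec (elemVec N (a, c)) (elemVec N (b, d)) := by
  ext ⟨x, y⟩ ⟨x', y'⟩
  simp only [kroneckerMap_apply, elemN, elemVec, vecMulVec_apply, Prod.mk.injEq]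
  split_ifs <;> simp_all

theorem elemVec_eq_single {N : ℕ} {u : ℕ × ℕ} (hu : InBox N u) :
    elemVec N u
      = Pi.single (⟨u.1 - 1, Nat.sub_one_lt_of_le hu.1 hu.2.1⟩,
          ⟨u.2 - 1, Nat.sub_one_lt_of_le hu.2.2.1 hu.2.2.2⟩) 1 := by
  ext x
  unfold InBox at hu
  simp only [elemVec, Pi.single_apply, Prod.ext_iff, Fin.ext_iff]
  congr 1
  apply propext
  omega

theorem elemVec_dotProduct_elemVec {N : ℕ} {u u' : ℕ × ℕ}
    (hu : InBox N u) (hu' : InBox N u') :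
    elemVec N u ⬝ᵥ elemVec N u' = if u = u' then 1 else 0 := by
  rw [elemVec_eq_single hu, elemVec_eq_single hu', single_dotProduct, one_mul, Pi.single_apply]
  unfold InBox at hu hu'
  simp only [Prod.ext_iff, Fin.ext_iff]
  congr 1
  apply propext
  omega

theorem elemVec_add_smul_bar_dotProduct {N : ℕ} {u u' : ℕ × ℕ} (hu : InBox N u)
    (hu' : InBox N u') (s s' : ℝ) :
    (elemVec N u + s • elemVec N (bar N u)) ⬝ᵥ (elemVec N u' + s' • elemVec N (bar N u'))
      = (if u = u' then 1 + s * s' else 0) + s' * (if u = bar N u' then 1 else 0)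
        + s * (if bar N u = u' then 1 else 0) := by
  have hbar : bar N u = bar N u' ↔ u = u' := by
    unfold InBox at hu hu'; simp only [bar, Prod.ext_iff]; omega
  simp only [add_dotProduct, dotProduct_add, smul_dotProduct, dotProduct_smul, smul_eq_mul,
    elemVec_dotProduct_elemVec hu hu', elemVec_dotProduct_elemVec hu hu'.bar,
    elemVec_dotProduct_elemVec hu.bar hu', elemVec_dotProduct_elemVec hu.bar hu'.bar, hbar]
  split_ifs <;> ring

def nestRep (p : ℕ) : NestIdx p → ℕ × ℕ
  | .inl _ => (p, p)
  | .inr (.inl (k, _)) => (p, k + 1)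
  | .inr (.inr (.inl (k, _))) => (k + 1, p)
  | .inr (.inr (.inr (.inl (k, l, _)))) => (k + 1, l + 1)
  | .inr (.inr (.inr (.inr (k, l, _)))) => (k + 1, 2 * p - 1 - (l + 1) + 1)

def nestSign (p : ℕ) : NestIdx p → ℝ
  | .inl _ => 0
  | .inr (.inl (_, e)) => sgn e
  | .inr (.inr (.inl (_, e))) => sgn e
  | .inr (.inr (.inr (.inl (_, _, e)))) => sgn e
  | .inr (.inr (.inr (.inr (_, _, e)))) => sgn e

noncomputable def nestWeight (p : ℕ) : NestIdx p → ℝ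
  | .inl _ => 1
  | .inr _ => 1 / 2

noncomputable def nestVec (p : ℕ) (α : NestIdx p) : Fin (2 * p - 1) × Fin (2 * p - 1) → ℝ :=
  elemVec (2 * p - 1) (nestRep p α)
    + nestSign p α • elemVec (2 * p - 1) (bar (2 * p - 1) (nestRep p α))

theorem sgn_mul_self (e : Bool) : sgn e * sgn e = 1 := by
  cases e <;> norm_num [sgn]

theorem vecMulVec_add_smul_self {I : Type*} (u w : I → ℝ) {s : ℝ} (hs : s * s = 1) :
    vecMulVec (u + s • w) (u + s • w)
      = vecMulVec u u + vecMulVec w w + s • (vecMulVec u w + vecMulVec w u) := by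
  simp only [add_vecMulVec, vecMulVec_add, smul_vecMulVec, vecMulVec_smul, smul_add, smul_smul,
    hs, one_smul]
  abel

theorem Pnest_eq_smul_vecMulVec {p : ℕ} (hp : 2 ≤ p) (α : NestIdx p) :
    Pnest p α = nestWeight p α • vecMulVec (nestVec p α) (nestVec p α) := by
  have hcenter : 2 * p - 1 - p + 1 = p := by omega
  have hbarbar : ∀ l : Fin (p - 1), 2 * p - 1 - (2 * p - 1 - (↑l + 1) + 1) + 1 = ↑l + 1 :=
    fun l => by omega
  rcases α with _ | ⟨k, e⟩ | ⟨k, e⟩ | ⟨k, l, e⟩ | ⟨k, l, e⟩ <;>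
    simp only [Pnest, nestWeight, nestVec, nestRep, nestSign, bar, hcenter, hbarbar,
      kronecker_add, add_kronecker, kronecker_smul, smul_kronecker, elemN_kronecker_elemN,
      vecMulVec_add_smul_self, sgn_mul_self, zero_smul, add_zero, one_smul]

theorem nestRep_inBox {p : ℕ} (hp : 2 ≤ p) (α : NestIdx p) :
    InBox (2 * p - 1) (nestRep p α) := by
  unfold InBox
  rcases α with _ | ⟨k, e⟩ | ⟨k, e⟩ | ⟨k, l, e⟩ | ⟨k, l, e⟩ <;> simp only [nestRep] <;> omega

-- Every `nestRep p α` other than `(p, p)` has first coordinate `< p`, or equals `(p, b)` with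
-- `b < p`; the bar of such a pair does not.
theorem eq_inl_of_bar_nestRep_eq {p : ℕ} {α β : NestIdx p}
    (h : bar (2 * p - 1) (nestRep p α) = nestRep p β) : α = .inl () ∧ β = .inl () := by
  rcases α with _ | ⟨k, e⟩ | ⟨k, e⟩ | ⟨k, l, e⟩ | ⟨k, l, e⟩ <;>
    rcases β with _ | ⟨k', e'⟩ | ⟨k', e'⟩ | ⟨k', l', e'⟩ | ⟨k', l', e'⟩ <;>
    simp only [nestRep, bar, Prod.mk.injEq] at h <;> simp <;> omega

theorem nestSign_mul_eq_neg_one {p : ℕ} {α β : NestIdx p} (h : nestRep p α = nestRep p β)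
    (hne : α ≠ β) : nestSign p α * nestSign p β = -1 := by
  rcases α with _ | ⟨k, e⟩ | ⟨k, e⟩ | ⟨k, l, e⟩ | ⟨k, l, e⟩ <;>
    rcases β with _ | ⟨k', e'⟩ | ⟨k', e'⟩ | ⟨k', l', e'⟩ | ⟨k', l', e'⟩ <;>
    simp only [nestRep, Prod.mk.injEq] at h <;>
    simp only [nestSign, ne_eq, Sum.inr.injEq, Prod.mk.injEq, Fin.ext_iff,
      not_true_eq_false] at hne ⊢ <;>
    first | omega | (cases e <;> cases e' <;> norm_num [sgn] at hne ⊢ <;> omega)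

theorem nestWeight_mul_nestVec_dotProduct {p : ℕ} (hp : 2 ≤ p) (α β : NestIdx p) :
    nestWeight p α * (nestVec p α ⬝ᵥ nestVec p β) = if α = β then 1 else 0 := by
  rw [nestVec, nestVec, elemVec_add_smul_bar_dotProduct (nestRep_inBox hp α) (nestRep_inBox hp β)]
  by_cases hαβ : α = β
  · subst hαβ
    by_cases hc : α = .inl ()
    · subst hc; simp [nestWeight, nestSign]
    have hfix : bar (2 * p - 1) (nestRep p α) ≠ nestRep p α :=
      fun h => hc (eq_inl_of_bar_nestRep_eq h).1
    rw [if_pos rfl, if_pos rfl, if_neg hfix, if_neg hfix.symm]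
    rcases α with _ | ⟨k, e⟩ | ⟨k, e⟩ | ⟨k, l, e⟩ | ⟨k, l, e⟩
    · exact absurd rfl hc
    all_goals simp only [nestWeight, nestSign, sgn_mul_self]; norm_num
  · have hfix : bar (2 * p - 1) (nestRep p α) ≠ nestRep p β :=
      fun h => hαβ (by simp [eq_inl_of_bar_nestRep_eq h])
    have hfix' : nestRep p α ≠ bar (2 * p - 1) (nestRep p β) :=
      fun h => hαβ (by simp [eq_inl_of_bar_nestRep_eq h.symm])
    rw [if_neg hfix, if_neg hfix', if_neg hαβ]
    split_ifs with hrep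
    · rw [nestSign_mul_eq_neg_one hrep hαβ]; ring
    · ring

theorem card_nestIdx {p : ℕ} (hp : 2 ≤ p) :
    Fintype.card (NestIdx p) = Fintype.card (Fin (2 * p - 1) × Fin (2 * p - 1)) := by
  obtain ⟨q, rfl⟩ : ∃ q, p = q + 1 := ⟨p - 1, by omega⟩
  simp only [Fintype.card_sum, Fintype.card_prod, Fintype.card_unit, Fintype.card_fin,
    Fintype.card_bool]
  rw [show 2 * (q + 1) - 1 = 2 * q + 1 by omega, Nat.add_sub_cancel]
  ring

/-- The full family of `N²` projectors for odd `N = 2p-1` satisfies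
`P_α P_β = δ_{αβ} P_α` and `Σ_α P_α = I`. -/
theorem Pnest_orthogonal_idempotent_complete (p : ℕ) (hp : 2 ≤ p) :
    (∀ α β : NestIdx p, Pnest p α * Pnest p β = if α = β then Pnest p α else 0) ∧
    (∑ α : NestIdx p, Pnest p α)
      = (1 : Matrix (Fin (2*p-1) × Fin (2*p-1)) (Fin (2*p-1) × Fin (2*p-1)) ℝ) := by
  -- instance search does not see through the abbreviation `NestIdx p` here
  let : DecidableEq (NestIdx p) := fun _ _ => inferInstance
  simp only [Pnest_eq_smul_vecMulVec hp]
  exact ⟨smul_vecMulVec_mul_smul_vecMulVec_of_biorthogonal (nestWeight_mul_nestVec_dotProduct hp),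
    sum_smul_vecMulVec_eq_one_of_biorthogonal (nestWeight_mul_nestVec_dotProduct hp)
      (card_nestIdx hp)⟩
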